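/- arXiv:1112.2768 — 4 statements merged into one kernel-verified Lean document; each statement's English description precedes it below -/
import Mathlib

section
/- Let η(1), …, η(d) be real random variables on a common probability space. Suppose for each m = 1, …, d there are constants C_m > 0, Δ_m > 0, r_m > 1 and a continuous positive slowly varying function L_m such that |η(m)|_p ≤ C_m (r_m − p)^{−Δ_m} L_m(1/(r_m − p)) for all 1 ≤ p < r_m. Set r = (Σ_{m=1}^d 1/r_m)^{-1} and assume r > 1. Then there is a constant C^{(d)} > 0 (depending on d, the C_m, Δ_m, r_m, L_m) such that for all 1 ≤ p < r, |∏_{m=1}^d η(m)|_p ≤ C^{(d)} (r − p)^{−Σ_{k=1}^d Δ_k} ∏_{k=1}^d L_k(1/(r − p)). -/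
/-!
Take the exponents `q m = p * r m / r`, for which `∑ p / q m = 1`, so the generalized Hölder
inequality bounds `|∏ η m|_p` by `∏ |η m|_{q m}`. Since `r m - q m = (r m / r) * (r - p)`, the
hypothesis at `q m` gives `(r - p) ^ (-Δ m)` times a fixed constant times
`L m ((r / r m) * (1 / (r - p)))`, and a continuous positive slowly varying function satisfies
`L (t * x) ≤ K * L x` uniformly for `x ≥ 1 / (r - 1)`.
-/

open MeasureTheory ENNReal Filter

/-- A function `L : ℝ → ℝ` is slowly varying at infinity if for every `t > 0`,
`L (t*x) / L x → 1` as `x → ∞`. -/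
def SlowlyVarying (L : ℝ → ℝ) : Prop :=
  ∀ t : ℝ, 0 < t → Tendsto (fun x : ℝ => L (t * x) / L x) atTop (nhds 1)

theorem eLpNorm_prod_le {ι α 𝕜 : Type*} [MeasurableSpace α] [NormedCommRing 𝕜] [NormOneClass 𝕜]
    {μ : Measure α} {f : ι → α → 𝕜} {p : ι → ℝ≥0∞} (s : Finset ι)
    (hf : ∀ i ∈ s, AEStronglyMeasurable (f i) μ) :
    eLpNorm (∏ i ∈ s, f i) (∑ i ∈ s, (p i)⁻¹)⁻¹ μ ≤ ∏ i ∈ s, eLpNorm (f i) (p i) μ := by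
  induction s using Finset.cons_induction with
  | empty =>
    simpa [eLpNorm_exponent_top] using
      eLpNormEssSup_le_of_ae_enorm_bound (μ := μ) (f := (1 : α → 𝕜)) (C := 1) (by simp)
  | cons i s hi ih =>
    rw [Finset.prod_cons, Finset.prod_cons, Finset.sum_cons]
    have hf' := Finset.forall_of_forall_cons hf
    have hpqr : HolderTriple (p i) (∑ j ∈ s, (p j)⁻¹)⁻¹ ((p i)⁻¹ + ∑ j ∈ s, (p j)⁻¹)⁻¹ :=
      ⟨by simp⟩
    have hmul := eLpNorm_le_eLpNorm_mul_eLpNorm_of_nnnorm (hf i (Finset.mem_cons_self ..))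
      (Finset.aestronglyMeasurable_prod s hf') (· * ·) 1
      (.of_forall fun _ => by simpa using nnnorm_mul_le _ _) (hpqr := hpqr)
    rw [ENNReal.coe_one, one_mul] at hmul
    exact hmul.trans (by gcongr; exact ih hf')

theorem eLpNorm_prod_le_of_inv_eq_sum_inv {ι α 𝕜 : Type*} [MeasurableSpace α] [NormedCommRing 𝕜]
    [NormOneClass 𝕜] {μ : Measure α} {f : ι → α → 𝕜} (s : Finset ι)
    (hf : ∀ i ∈ s, AEStronglyMeasurable (f i) μ) {p : ℝ} {q : ι → ℝ} (hp : 0 < p)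
    (hq : ∀ i ∈ s, 0 < q i) (hpq : p⁻¹ = ∑ i ∈ s, (q i)⁻¹) :
    eLpNorm (fun x => ∏ i ∈ s, f i x) (ENNReal.ofReal p) μ ≤
      ∏ i ∈ s, eLpNorm (f i) (ENNReal.ofReal (q i)) μ := by
  have hexp : ENNReal.ofReal p = (∑ i ∈ s, (ENNReal.ofReal (q i))⁻¹)⁻¹ := by
    rw [Finset.sum_congr rfl fun i hi => (ENNReal.ofReal_inv_of_pos (hq i hi)).symm,
      ← ENNReal.ofReal_sum_of_nonneg fun i hi => (inv_pos.2 (hq i hi)).le, ← hpq,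
      ← ENNReal.ofReal_inv_of_pos (inv_pos.2 hp), inv_inv]
  rw [hexp, ← Finset.prod_fn]
  exact eLpNorm_prod_le s hf

theorem SlowlyVarying.exists_le_mul {L : ℝ → ℝ} (hL : SlowlyVarying L) (hc : Continuous L)
    (hpos : ∀ x, 0 < L x) {t : ℝ} (ht : 0 < t) (a : ℝ) :
    ∃ K, 0 < K ∧ ∀ x, a ≤ x → L (t * x) ≤ K * L x := by
  have hratio : Continuous fun x => L (t * x) / L x :=
    (hc.comp (continuous_const.mul continuous_id)).div hc fun x => (hpos x).ne'
  obtain ⟨X, hX⟩ := eventually_atTop.1 ((hL t ht).eventually_le_const _root_.one_lt_two)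
  obtain ⟨B, hB⟩ := (isCompact_Icc (a := a) (b := X)).bddAbove_image hratio.continuousOn
  refine ⟨max B 2, by positivity, fun x hx => ?_⟩
  have hx_bound : L (t * x) / L x ≤ max B 2 := by
    rcases le_total x X with hxX | hXx
    · exact (hB ⟨x, ⟨hx, hxX⟩, rfl⟩).trans (le_max_left _ _)
    · exact (hX x hXx).trans (le_max_right _ _)
  rwa [div_le_iff₀ (hpos x)] at hx_bound

theorem inv_sum_one_div_le {ι : Type*} {s : Finset ι} {r : ι → ℝ} (hr : ∀ j ∈ s, 0 < r j)
    {i : ι} (hi : i ∈ s) : (∑ j ∈ s, 1 / r j)⁻¹ ≤ r i := by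
  have hri := hr i hi
  have hnonneg : ∀ j ∈ s, 0 ≤ 1 / r j := fun j hj => (one_div_pos.2 (hr j hj)).le
  rw [inv_le_comm₀ (Finset.sum_pos' hnonneg ⟨i, hi, by positivity⟩) hri, ← one_div]
  exact Finset.single_le_sum hnonneg hi

theorem inv_eq_sum_inv_mul_div {ι : Type*} (s : Finset ι) {ρ p : ℝ} {r : ι → ℝ}
    (hρ : ρ⁻¹ = ∑ i ∈ s, 1 / r i) (hρ0 : ρ ≠ 0) : p⁻¹ = ∑ i ∈ s, (p * r i / ρ)⁻¹ := by
  have hterm : ∀ i, (p * r i / ρ)⁻¹ = ρ * p⁻¹ * (1 / r i) := fun i => by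
    rw [div_eq_mul_inv, mul_inv, mul_inv, inv_inv]; ring
  rw [Finset.sum_congr rfl fun i _ => hterm i, ← Finset.mul_sum, ← hρ, mul_comm ρ,
    mul_assoc, mul_inv_cancel₀ hρ0, mul_one]

theorem eLpNorm_le_of_rescaled_exponent {α E : Type*} [MeasurableSpace α] [NormedAddCommGroup E]
    {μ : Measure α} {f : α → E} {C Δ r ρ K p : ℝ} {L : ℝ → ℝ}
    (hf : ∀ q, 1 ≤ q → q < r →
      eLpNorm f (ENNReal.ofReal q) μ ≤ ENNReal.ofReal (C * (r - q) ^ (-Δ) * L (1 / (r - q))))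
    (hC : 0 ≤ C) (hρ : 0 < ρ) (hρr : ρ ≤ r) (hp1 : 1 ≤ p) (hp : p < ρ)
    (hK : L (ρ / r * (1 / (ρ - p))) ≤ K * L (1 / (ρ - p))) :
    eLpNorm f (ENNReal.ofReal (p * r / ρ)) μ ≤
      ENNReal.ofReal (C * (r / ρ) ^ (-Δ) * K * ((ρ - p) ^ (-Δ) * L (1 / (ρ - p)))) := by
  have hr : 0 < r := hρ.trans_le hρr
  have hgap : r - p * r / ρ = r / ρ * (ρ - p) := by field_simp
  have hq1 : 1 ≤ p * r / ρ := by rw [le_div_iff₀ hρ]; nlinarith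
  have hqr : p * r / ρ < r := by rw [div_lt_iff₀ hρ]; nlinarith
  refine (hf _ hq1 hqr).trans (ENNReal.ofReal_le_ofReal ?_)
  have hL : L (1 / (r - p * r / ρ)) = L (ρ / r * (1 / (ρ - p))) := by
    rw [hgap]; congr 1; field_simp
  have hpos : 0 ≤ C * (r / ρ) ^ (-Δ) * (ρ - p) ^ (-Δ) := by
    have := sub_pos.2 hp; positivity
  calc C * (r - p * r / ρ) ^ (-Δ) * L (1 / (r - p * r / ρ))
      = C * (r / ρ) ^ (-Δ) * (ρ - p) ^ (-Δ) * L (ρ / r * (1 / (ρ - p))) := by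
        rw [hL, hgap, Real.mul_rpow (by positivity) (sub_pos.2 hp).le]; ring
    _ ≤ C * (r / ρ) ^ (-Δ) * (ρ - p) ^ (-Δ) * (K * L (1 / (ρ - p))) := by gcongr
    _ = C * (r / ρ) ^ (-Δ) * K * ((ρ - p) ^ (-Δ) * L (1 / (ρ - p))) := by ring

theorem prod_mul_rpow_neg_mul {ι : Type*} (s : Finset ι) {x : ℝ} (hx : 0 < x) (a Δ b : ι → ℝ) :
    ∏ i ∈ s, a i * (x ^ (-Δ i) * b i) = (∏ i ∈ s, a i) * x ^ (-∑ i ∈ s, Δ i) * ∏ i ∈ s, b i := by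
  rw [Finset.prod_mul_distrib, Finset.prod_mul_distrib, ← Real.rpow_sum_of_pos hx,
    Finset.sum_neg_distrib, mul_assoc]

theorem moment_product_regular_varying_general
    {Ω : Type*} [MeasurableSpace Ω] (μ : Measure Ω)
    (d : ℕ) (η : Fin d → Ω → ℝ)
    (hηm : ∀ m, AEStronglyMeasurable (η m) μ)
    (C : Fin d → ℝ) (hC : ∀ m, 0 < C m)
    (Δ : Fin d → ℝ)
    (r : Fin d → ℝ) (hr : ∀ m, 1 < r m)
    (L : Fin d → ℝ → ℝ) (hLcont : ∀ m, Continuous (L m))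
    (hLpos : ∀ m x, 0 < L m x) (hLsv : ∀ m, SlowlyVarying (L m))
    (hη : ∀ m p, 1 ≤ p → p < r m →
      eLpNorm (η m) (ENNReal.ofReal p) μ ≤
        ENNReal.ofReal (C m * (r m - p) ^ (-(Δ m)) * L m (1 / (r m - p))))
    (rtot : ℝ) (hrtot : rtot = (∑ m, 1 / r m)⁻¹) (hrtot1 : 1 < rtot) :
    ∃ Cd : ℝ, 0 < Cd ∧ ∀ p, 1 ≤ p → p < rtot →
      eLpNorm (fun ω => ∏ m, η m ω) (ENNReal.ofReal p) μ ≤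
        ENNReal.ofReal (Cd * (rtot - p) ^ (-(∑ k, Δ k)) *
          ∏ k, L k (1 / (rtot - p))) := by
  have hr0 : ∀ m, 0 < r m := fun m => one_pos.trans (hr m)
  have hρ0 : 0 < rtot := one_pos.trans hrtot1
  have hρr : ∀ m, rtot ≤ r m := fun m =>
    hrtot ▸ inv_sum_one_div_le (fun k _ => hr0 k) (Finset.mem_univ m)
  choose K hK0 hK using fun m =>
    (hLsv m).exists_le_mul (hLcont m) (hLpos m) (div_pos hρ0 (hr0 m)) (1 / (rtot - 1))
  refine ⟨∏ m, C m * (r m / rtot) ^ (-Δ m) * K m, Finset.prod_pos fun m _ => ?_,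
    fun p hp1 hp => ?_⟩
  · have := hC m; have := hr0 m; have := hK0 m; positivity
  have hρp : 0 < rtot - p := sub_pos.2 hp
  calc eLpNorm (fun ω => ∏ m, η m ω) (ENNReal.ofReal p) μ
      ≤ ∏ m, eLpNorm (η m) (ENNReal.ofReal (p * r m / rtot)) μ :=
        eLpNorm_prod_le_of_inv_eq_sum_inv _ (fun m _ => hηm m) (by positivity)
          (fun m _ => by have := hr0 m; positivity)
          (inv_eq_sum_inv_mul_div _ (by rw [hrtot, inv_inv]) hρ0.ne')
    _ ≤ ∏ m, ENNReal.ofReal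
          (C m * (r m / rtot) ^ (-Δ m) * K m * ((rtot - p) ^ (-Δ m) * L m (1 / (rtot - p)))) :=
        Finset.prod_le_prod' fun m _ =>
          eLpNorm_le_of_rescaled_exponent (hη m) (hC m).le hρ0 (hρr m) hp1 hp
            (hK m _ (one_div_le_one_div_of_le hρp (by linarith)))
    _ = _ := by
      rw [← ENNReal.ofReal_prod_of_nonneg fun m _ => ?_, prod_mul_rpow_neg_mul _ hρp]
      have := hC m; have := hr0 m; have := hK0 m; have := hLpos m (1 / (rtot - p))
      positivity

/-- If `|η m|_p ≤ C m * (r m − p)^{−Δ m} * L m (1/(r m − p))`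
for `1 ≤ p < r m` with `L m` continuous, positive and slowly varying, and
`r = (Σ 1/r m)⁻¹ > 1`, then there is `C⁽ᵈ⁾ > 0` such that for all `1 ≤ p < r`,
`|∏ m, η m|_p ≤ C⁽ᵈ⁾ * (r − p)^{−Σ Δ} * ∏ k, L k (1/(r − p))`. -/
theorem moment_product_regular_varying
    {Ω : Type*} [MeasurableSpace Ω] (μ : Measure Ω) [IsProbabilityMeasure μ]
    (d : ℕ) (hd : 0 < d) (η : Fin d → Ω → ℝ)
    (hηm : ∀ m, AEStronglyMeasurable (η m) μ)
    (C : Fin d → ℝ) (hC : ∀ m, 0 < C m)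
    (Δ : Fin d → ℝ) (hΔ : ∀ m, 0 < Δ m)
    (r : Fin d → ℝ) (hr : ∀ m, 1 < r m)
    (L : Fin d → ℝ → ℝ) (hLcont : ∀ m, Continuous (L m))
    (hLpos : ∀ m x, 0 < L m x) (hLsv : ∀ m, SlowlyVarying (L m))
    (hη : ∀ m p, 1 ≤ p → p < r m →
      eLpNorm (η m) (ENNReal.ofReal p) μ ≤
        ENNReal.ofReal (C m * (r m - p) ^ (-(Δ m)) * L m (1 / (r m - p))))
    (rtot : ℝ) (hrtot : rtot = (∑ m, 1 / r m)⁻¹) (hrtot1 : 1 < rtot) :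
    ∃ Cd : ℝ, 0 < Cd ∧ ∀ p, 1 ≤ p → p < rtot →
      eLpNorm (fun ω => ∏ m, η m ω) (ENNReal.ofReal p) μ ≤
        ENNReal.ofReal (Cd * (rtot - p) ^ (-(∑ k, Δ k)) *
          ∏ k, L k (1 / (rtot - p))) :=
  moment_product_regular_varying_general μ d η hηm C hC Δ r hr L hLcont hLpos hLsv hη rtot hrtot
    hrtot1
end

section
/- Let ε be a random variable with P(ε > x) = 1/x for all x ≥ 1 (so that ε ≥ 1 almost surely), let r_1, r_2 > 1, and set r = (1/r_1 + 1/r_2)^{-1}; assume r > 1. Put ξ = ε^{1/r_1} and η = ε^{1/r_2}. Then: (i) for every p with 1 ≤ p < r_1, E|ξ|^p = r_1/(r_1 − p), i.e. |ξ|_p = (r_1/(r_1 − p))^{1/p}; (ii) for every p with 1 ≤ p < r, E|ξη|^p = r/(r − p), i.e. |ξη|_p = (r/(r − p))^{1/p}. In particular the exponent −(1/r_1 + 1/r_2) in the product-moment bound |ξη|_p ≲ (r − p)^{−1/r_1 − 1/r_2} is attained. -/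
/-!
By the layer-cake formula,
`E ε^a = ∫₀^∞ P(ε^a > t) dt = 1 + ∫₁^∞ t^{-1/a} dt = 1/(1 - a)` for `0 < a < 1`.
Both moments in the theorem are of this form: `|ξ|^p = ε^{p/r₁}`, and
`|ξη|^p = ε^{p/r}` because `1/r₁ + 1/r₂ = 1/r`.
-/

open MeasureTheory ENNReal Set

def HasParetoTail {Ω : Type*} [MeasurableSpace Ω] (μ : Measure Ω) (ε : Ω → ℝ) : Prop :=
  ∀ x : ℝ, 1 ≤ x → μ {ω | x < ε ω} = ENNReal.ofReal (1 / x)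

lemma lintegral_Ioi_one_rpow_neg_inv {a : ℝ} (ha : 0 < a) (ha1 : a < 1) :
    ∫⁻ t in Ioi (1 : ℝ), ENNReal.ofReal (t ^ (-a⁻¹)) = ENNReal.ofReal (a / (1 - a)) := by
  have hlt : -a⁻¹ < -1 := by linarith [(one_lt_inv₀ ha).mpr ha1]
  have hnn : 0 ≤ᵐ[volume.restrict (Ioi (1 : ℝ))] fun t : ℝ => t ^ (-a⁻¹) :=
    ae_restrict_of_forall_mem measurableSet_Ioi fun t ht =>
      Real.rpow_nonneg (zero_le_one.trans (le_of_lt ht)) _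
  rw [← ofReal_integral_eq_lintegral_ofReal (integrableOn_Ioi_rpow_of_lt hlt one_pos) hnn,
    integral_Ioi_rpow_of_lt hlt one_pos, Real.one_rpow]
  congr 1
  field_simp
  rw [show -1 + a = -(1 - a) by ring, one_div_neg_eq_neg_one_div, neg_neg]

namespace HasParetoTail

variable {Ω : Type*} [MeasurableSpace Ω] {μ : Measure Ω} [IsProbabilityMeasure μ]
  {ε : Ω → ℝ}

lemma ae_one_lt (h : HasParetoTail μ ε) (hεm : Measurable ε) : ∀ᵐ ω ∂μ, 1 < ε ω :=
  (mem_ae_iff_prob_eq_one (hεm measurableSet_Ioi)).mpr ((h 1 le_rfl).trans (by simp))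

lemma measure_lt_rpow_of_le_one (h : HasParetoTail μ ε) (hεm : Measurable ε) {a t : ℝ}
    (ha : 0 < a) (ht : t ≤ 1) : μ {ω | t < ε ω ^ a} = 1 := by
  refine (mem_ae_iff_prob_eq_one (hεm.pow_const a measurableSet_Ioi)).mp ?_
  filter_upwards [h.ae_one_lt hεm] with ω hω
  exact ht.trans_lt (Real.one_lt_rpow hω ha)

lemma measure_lt_rpow_of_one_lt (h : HasParetoTail μ ε) (hεm : Measurable ε) {a t : ℝ}
    (ha : 0 < a) (ht : 1 < t) : μ {ω | t < ε ω ^ a} = ENNReal.ofReal (t ^ (-a⁻¹)) := by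
  have ht0 : 0 < t := one_pos.trans ht
  have hset : {ω | t < ε ω ^ a} =ᵐ[μ] {ω | t ^ a⁻¹ < ε ω} := by
    rw [Filter.eventuallyEq_set]
    filter_upwards [h.ae_one_lt hεm] with ω hω
    exact (Real.rpow_inv_lt_iff_of_pos ht0.le (by linarith) ha).symm
  rw [measure_congr hset, h _ (Real.one_le_rpow ht.le (inv_nonneg.mpr ha.le)),
    Real.rpow_neg ht0.le, one_div]

lemma lintegral_rpow (h : HasParetoTail μ ε) (hεm : Measurable ε) {a : ℝ} (ha : 0 < a)
    (ha1 : a < 1) : ∫⁻ ω, ENNReal.ofReal (ε ω ^ a) ∂μ = ENNReal.ofReal (1 / (1 - a)) := by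
  have hnn : 0 ≤ᵐ[μ] fun ω => ε ω ^ a := by
    filter_upwards [h.ae_one_lt hεm] with ω hω
    exact Real.rpow_nonneg (by linarith) a
  rw [lintegral_eq_lintegral_meas_lt μ hnn (hεm.pow_const a).aemeasurable,
    ← Ioc_union_Ioi_eq_Ioi zero_le_one,
    lintegral_union measurableSet_Ioi (Ioc_disjoint_Ioi le_rfl),
    setLIntegral_congr_fun measurableSet_Ioc fun t ht => h.measure_lt_rpow_of_le_one hεm ha ht.2,
    setLIntegral_congr_fun measurableSet_Ioi fun t ht => h.measure_lt_rpow_of_one_lt hεm ha ht,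
    lintegral_Ioi_one_rpow_neg_inv ha ha1]
  have hpos : 0 < 1 - a := sub_pos.mpr ha1
  rw [setLIntegral_one, Real.volume_Ioc, sub_zero,
    ← ENNReal.ofReal_add zero_le_one (div_nonneg ha.le hpos.le)]
  congr 1
  field_simp
  ring

lemma abs_rpow_one_div_rpow_ae_eq (h : HasParetoTail μ ε) (hεm : Measurable ε) (p q : ℝ) :
    (fun ω => |ε ω ^ (1 / q)| ^ p) =ᵐ[μ] fun ω => ε ω ^ (p / q) := by
  filter_upwards [h.ae_one_lt hεm] with ω hω
  have hε : 0 ≤ ε ω := by linarith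
  rw [abs_of_nonneg (Real.rpow_nonneg hε _), ← Real.rpow_mul hε, one_div_mul_eq_div]

lemma lintegral_ofReal_abs_rpow_one_div_rpow (h : HasParetoTail μ ε) (hεm : Measurable ε)
    {p q : ℝ} (hp : 0 < p) (hpq : p < q) :
    ∫⁻ ω, ENNReal.ofReal (|ε ω ^ (1 / q)| ^ p) ∂μ = ENNReal.ofReal (q / (q - p)) := by
  have hq : 0 < q := hp.trans hpq
  rw [lintegral_congr_ae <|
      (h.abs_rpow_one_div_rpow_ae_eq hεm p q).mono fun _ hω => congrArg ENNReal.ofReal hω,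
    h.lintegral_rpow hεm (div_pos hp hq) ((div_lt_one hq).mpr hpq)]
  congr 1
  field_simp

lemma integral_abs_rpow_one_div_rpow (h : HasParetoTail μ ε) (hεm : Measurable ε)
    {p q : ℝ} (hp : 0 < p) (hpq : p < q) :
    ∫ ω, |ε ω ^ (1 / q)| ^ p ∂μ = q / (q - p) := by
  rw [integral_eq_lintegral_of_nonneg_ae (Filter.Eventually.of_forall fun ω => by positivity)
      ((hεm.pow_const _).abs.pow_const p).aestronglyMeasurable,
    h.lintegral_ofReal_abs_rpow_one_div_rpow hεm hp hpq,
    ENNReal.toReal_ofReal (div_nonneg (hp.trans hpq).le (sub_pos.mpr hpq).le)]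

lemma eLpNorm_rpow_one_div (h : HasParetoTail μ ε) (hεm : Measurable ε)
    {p q : ℝ} (hp : 0 < p) (hpq : p < q) :
    eLpNorm (fun ω => ε ω ^ (1 / q)) (ENNReal.ofReal p) μ =
      ENNReal.ofReal ((q / (q - p)) ^ (1 / p)) := by
  have henorm (x : ℝ) : ‖x‖ₑ ^ p = ENNReal.ofReal (|x| ^ p) := by
    rw [Real.enorm_eq_ofReal_abs, ENNReal.ofReal_rpow_of_nonneg (abs_nonneg x) hp.le]
  rw [eLpNorm_eq_lintegral_rpow_enorm_toReal (by simpa using hp) ofReal_ne_top,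
    ENNReal.toReal_ofReal hp.le]
  simp_rw [henorm]
  rw [h.lintegral_ofReal_abs_rpow_one_div_rpow hεm hp hpq, ENNReal.ofReal_rpow_of_nonneg
    (div_nonneg (hp.trans hpq).le (sub_pos.mpr hpq).le) (one_div_nonneg.mpr hp.le)]

end HasParetoTail

theorem pareto_product_moments_general
    {Ω : Type*} [MeasurableSpace Ω] (μ : Measure Ω) [IsProbabilityMeasure μ]
    (ε : Ω → ℝ) (hεm : Measurable ε)
    (htail : ∀ x : ℝ, 1 ≤ x → μ {ω | x < ε ω} = ENNReal.ofReal (1 / x))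
    (r₁ r₂ : ℝ)
    (r : ℝ) (hr : r = (1 / r₁ + 1 / r₂)⁻¹) :
    (∀ p : ℝ, 1 ≤ p → p < r₁ →
        (∫ ω, |ε ω ^ (1 / r₁)| ^ p ∂μ) = r₁ / (r₁ - p) ∧
        eLpNorm (fun ω => ε ω ^ (1 / r₁)) (ENNReal.ofReal p) μ =
          ENNReal.ofReal ((r₁ / (r₁ - p)) ^ (1 / p))) ∧
    (∀ p : ℝ, 1 ≤ p → p < r →
        (∫ ω, |ε ω ^ (1 / r₁) * ε ω ^ (1 / r₂)| ^ p ∂μ) = r / (r - p) ∧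
        eLpNorm (fun ω => ε ω ^ (1 / r₁) * ε ω ^ (1 / r₂)) (ENNReal.ofReal p) μ =
          ENNReal.ofReal ((r / (r - p)) ^ (1 / p))) := by
  have hε : HasParetoTail μ ε := htail
  have hprod : (fun ω => ε ω ^ (1 / r₁) * ε ω ^ (1 / r₂)) =ᵐ[μ] fun ω => ε ω ^ (1 / r) := by
    filter_upwards [hε.ae_one_lt hεm] with ω hω
    rw [hr, one_div (_ + _)⁻¹, inv_inv, Real.rpow_add (by linarith)]
  refine ⟨fun p hp hpr₁ => ?_, fun p hp hpr => ?_⟩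
  · have hp0 : 0 < p := by linarith
    exact ⟨hε.integral_abs_rpow_one_div_rpow hεm hp0 hpr₁,
      hε.eLpNorm_rpow_one_div hεm hp0 hpr₁⟩
  · have hp0 : 0 < p := by linarith
    rw [integral_congr_ae (hprod.mono fun _ hω => congrArg (|·| ^ p) hω),
      eLpNorm_congr_ae hprod]
    exact ⟨hε.integral_abs_rpow_one_div_rpow hεm hp0 hpr, hε.eLpNorm_rpow_one_div hεm hp0 hpr⟩

/-- If `P(ε > x) = 1/x` for all `x ≥ 1`, `ξ = ε^{1/r₁}`,
`η = ε^{1/r₂}` with `r₁, r₂ > 1` and `r = (1/r₁ + 1/r₂)⁻¹ > 1`, then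
`E|ξ|^p = r₁/(r₁ − p)` for `1 ≤ p < r₁` (so `|ξ|_p = (r₁/(r₁−p))^{1/p}`), and
`E|ξη|^p = r/(r − p)` for `1 ≤ p < r` (so `|ξη|_p = (r/(r−p))^{1/p}`). -/
theorem pareto_product_moments
    {Ω : Type*} [MeasurableSpace Ω] (μ : Measure Ω) [IsProbabilityMeasure μ]
    (ε : Ω → ℝ) (hεm : Measurable ε)
    (htail : ∀ x : ℝ, 1 ≤ x → μ {ω | x < ε ω} = ENNReal.ofReal (1 / x))
    (r₁ r₂ : ℝ) (hr₁ : 1 < r₁) (hr₂ : 1 < r₂)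
    (r : ℝ) (hr : r = (1 / r₁ + 1 / r₂)⁻¹) (hr1 : 1 < r) :
    (∀ p : ℝ, 1 ≤ p → p < r₁ →
        (∫ ω, |ε ω ^ (1 / r₁)| ^ p ∂μ) = r₁ / (r₁ - p) ∧
        eLpNorm (fun ω => ε ω ^ (1 / r₁)) (ENNReal.ofReal p) μ =
          ENNReal.ofReal ((r₁ / (r₁ - p)) ^ (1 / p))) ∧
    (∀ p : ℝ, 1 ≤ p → p < r →
        (∫ ω, |ε ω ^ (1 / r₁) * ε ω ^ (1 / r₂)| ^ p ∂μ) = r / (r - p) ∧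
        eLpNorm (fun ω => ε ω ^ (1 / r₁) * ε ω ^ (1 / r₂)) (ENNReal.ofReal p) μ =
          ENNReal.ofReal ((r / (r - p)) ^ (1 / p))) :=
  pareto_product_moments_general μ ε hεm htail r₁ r₂ r hr
end

section
/- Let ξ be a real random variable, r > 1, γ > −1 constants, L a continuous positive slowly varying function, and C_2 > 0 a constant such that E|ξ|^p ≤ C_2 (r − p)^{−γ−1} L(1/(r − p)) for all 1 ≤ p < r. Then there exists a constant C_4 = C_4(r, γ, L, C_2) > 0 such that P(|ξ| ≥ x) ≤ C_4 · x^{−r} (log x)^{γ+1} L(log x) for all x > e. -/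
/-! Markov's inequality for `|ξ| ^ p` gives `P(|ξ| ≥ x) ≤ E|ξ|^p / x^p` for every `p < r`. Take
`r - p = (r - 1) / log x`: then `x ^ (r - p) = exp (r - 1)` is a constant, the moment bound becomes
`(r - 1) ^ (-γ - 1) (log x) ^ (γ + 1) L (log x / (r - 1))`, and `L (log x / (r - 1)) ≤ K L (log x)`
because `L` is slowly varying and continuous. -/

open MeasureTheory ENNReal Filter Real

theorem SlowlyVarying.exists_le_const_mul {L : ℝ → ℝ} (hL : SlowlyVarying L)
    (hLcont : Continuous L) (hLpos : ∀ x, 0 < L x) {t : ℝ} (ht : 0 < t) (a : ℝ) :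
    ∃ K, 0 < K ∧ ∀ y, a ≤ y → L (t * y) ≤ K * L y := by
  set g : ℝ → ℝ := fun y => L (t * y) / L y
  have hg : Continuous g :=
    (hLcont.comp (continuous_const_mul t)).div hLcont fun y => (hLpos y).ne'
  obtain ⟨Y, hY⟩ := ((hL t ht).eventually (eventually_le_nhds one_lt_two)).exists_forall_of_atTop
  obtain ⟨y₀, -, hy₀⟩ := isCompact_Icc.exists_isMaxOn
    (Set.nonempty_Icc.mpr (le_max_left a Y)) hg.continuousOn
  refine ⟨max 2 (g y₀), by positivity, fun y hy => ?_⟩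
  have hgy : g y ≤ max 2 (g y₀) := by
    rcases le_total y (max a Y) with h | h
    · exact (hy₀ ⟨hy, h⟩).trans (le_max_right _ _)
    · exact (hY y ((le_max_right a Y).trans h)).trans (le_max_left _ _)
  exact (div_le_iff₀ (hLpos y)).mp hgy

theorem meas_le_abs_le_lintegral_rpow_div {Ω : Type*} [MeasurableSpace Ω] (μ : Measure Ω)
    {ξ : Ω → ℝ} (hξ : Measurable ξ) {x p : ℝ} (hx : 0 < x) (hp : 0 < p) :
    μ {ω | x ≤ |ξ ω|} ≤ (∫⁻ ω, ENNReal.ofReal (|ξ ω| ^ p) ∂μ) / ENNReal.ofReal (x ^ p) := by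
  calc μ {ω | x ≤ |ξ ω|}
      ≤ μ {ω | ENNReal.ofReal (x ^ p) ≤ ENNReal.ofReal (|ξ ω| ^ p)} :=
        measure_mono fun ω hω => ofReal_le_ofReal (rpow_le_rpow hx.le hω hp.le)
    _ ≤ _ := meas_ge_le_lintegral_div (by fun_prop) (by simp [rpow_pos_of_pos hx]) ofReal_ne_top

theorem Real.rpow_sub_div_log {x : ℝ} (hx : 0 < x) (hx₁ : x ≠ 1) (r c : ℝ) :
    x ^ (r - c / log x) = x ^ r * exp (-c) := by
  have hlog : log x ≠ 0 := log_ne_zero_of_pos_of_ne_one hx hx₁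
  rw [rpow_sub hx, rpow_def_of_pos hx (c / log x), mul_div_cancel₀ _ hlog, exp_neg, div_eq_mul_inv]

theorem rpow_mul_div_rpow_sub_div_log (f : ℝ → ℝ) {x c : ℝ} (hx : 1 < x) (hc : 0 < c) (r γ : ℝ) :
    (c / log x) ^ (-γ - 1) * f (log x / c) / x ^ (r - c / log x) =
      c ^ (-γ - 1) * exp c * x ^ (-r) * log x ^ (γ + 1) * f (c⁻¹ * log x) := by
  have hx₀ : 0 < x := one_pos.trans hx
  have hlog : 0 < log x := log_pos hx
  rw [div_rpow hc.le hlog.le, ← neg_add', rpow_neg hlog.le (γ + 1), div_inv_eq_mul,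
    rpow_sub_div_log hx₀ hx.ne' r c, rpow_neg hx₀.le, exp_neg, div_eq_inv_mul (log x)]
  field_simp

theorem tail_from_moment_bound_general
    {Ω : Type*} [MeasurableSpace Ω] (μ : Measure Ω) [IsProbabilityMeasure μ]
    (ξ : Ω → ℝ) (hξm : Measurable ξ)
    (r γ : ℝ) (hr : 1 < r)
    (L : ℝ → ℝ) (hLcont : Continuous L) (hLpos : ∀ x, 0 < L x)
    (hLsv : SlowlyVarying L)
    (C₂ : ℝ) (hC₂ : 0 < C₂)
    (hmom : ∀ p : ℝ, 1 ≤ p → p < r →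
      (∫⁻ ω, ENNReal.ofReal (|ξ ω| ^ p) ∂μ) ≤
        ENNReal.ofReal (C₂ * (r - p) ^ (-γ - 1) * L (1 / (r - p)))) :
    ∃ C₄ : ℝ, 0 < C₄ ∧ ∀ x : ℝ, Real.exp 1 < x →
      μ {ω | x ≤ |ξ ω|} ≤
        ENNReal.ofReal (C₄ * x ^ (-r) * (Real.log x) ^ (γ + 1) *
          L (Real.log x)) := by
  have hr₁ : 0 < r - 1 := sub_pos.2 hr
  obtain ⟨K, hK₀, hK⟩ := hLsv.exists_le_const_mul hLcont hLpos (inv_pos.2 hr₁) 1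
  refine ⟨C₂ * (r - 1) ^ (-γ - 1) * exp (r - 1) * K, by positivity, fun x hx => ?_⟩
  have hx₁ : 1 < x := (one_lt_exp_iff.2 one_pos).trans hx
  have hx₀ : 0 < x := one_pos.trans hx₁
  have hlog : 1 < log x := (lt_log_iff_exp_lt hx₀).2 hx
  have hlog₀ : 0 < log x := one_pos.trans hlog
  set p := r - (r - 1) / log x with hp
  have hpr : p < r := by linarith [div_pos hr₁ hlog₀]
  have hp₁ : 1 ≤ p := by linarith [div_le_self hr₁.le hlog.le]
  calc μ {ω | x ≤ |ξ ω|}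
      ≤ (∫⁻ ω, ENNReal.ofReal (|ξ ω| ^ p) ∂μ) / ENNReal.ofReal (x ^ p) :=
        meas_le_abs_le_lintegral_rpow_div μ hξm hx₀ (by linarith)
    _ ≤ ENNReal.ofReal (C₂ * (r - p) ^ (-γ - 1) * L (1 / (r - p))) / ENNReal.ofReal (x ^ p) := by
        gcongr; exact hmom p hp₁ hpr
    _ = ENNReal.ofReal (C₂ * ((r - 1) ^ (-γ - 1) * exp (r - 1) * x ^ (-r) * log x ^ (γ + 1) *
          L ((r - 1)⁻¹ * log x))) := by
        rw [← ofReal_div_of_pos (rpow_pos_of_pos hx₀ p), mul_assoc, mul_div_assoc, hp,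
          sub_sub_self, one_div_div, rpow_mul_div_rpow_sub_div_log L hx₁ hr₁]
    _ ≤ _ := by
        refine ofReal_le_ofReal ?_
        calc _ ≤ C₂ * ((r - 1) ^ (-γ - 1) * exp (r - 1) * x ^ (-r) * log x ^ (γ + 1) *
              (K * L (log x))) := by gcongr; exact hK _ hlog.le
          _ = _ := by ring

/-- If `E|ξ|^p ≤ C₂ (r − p)^{−γ−1} L(1/(r − p))` for all
`1 ≤ p < r`, with `r > 1`, `γ > −1`, `L` continuous positive slowly varying,
then there is `C₄ = C₄(r,γ,L,C₂) > 0` with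
`P(|ξ| ≥ x) ≤ C₄ x^{−r} (log x)^{γ+1} L(log x)` for all `x > e`. -/
theorem tail_from_moment_bound
    {Ω : Type*} [MeasurableSpace Ω] (μ : Measure Ω) [IsProbabilityMeasure μ]
    (ξ : Ω → ℝ) (hξm : Measurable ξ)
    (r γ : ℝ) (hr : 1 < r) (hγ : -1 < γ)
    (L : ℝ → ℝ) (hLcont : Continuous L) (hLpos : ∀ x, 0 < L x)
    (hLsv : SlowlyVarying L)
    (C₂ : ℝ) (hC₂ : 0 < C₂)
    (hmom : ∀ p : ℝ, 1 ≤ p → p < r →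
      (∫⁻ ω, ENNReal.ofReal (|ξ ω| ^ p) ∂μ) ≤
        ENNReal.ofReal (C₂ * (r - p) ^ (-γ - 1) * L (1 / (r - p)))) :
    ∃ C₄ : ℝ, 0 < C₄ ∧ ∀ x : ℝ, Real.exp 1 < x →
      μ {ω | x ≤ |ξ ω|} ≤
        ENNReal.ofReal (C₄ * x ^ (-r) * (Real.log x) ^ (γ + 1) *
          L (Real.log x)) :=
  tail_from_moment_bound_general μ ξ hξm r γ hr L hLcont hLpos hLsv C₂ hC₂ hmom
end

section
/- Fix r > 1 and β > 0, and let ζ be a discrete random variable with P(ζ = exp(e^k)) = C_5 · exp(βrk − r e^k) for k = 1, 2, …, where C_5^{-1} = Σ_{k=1}^∞ exp(βrk − r e^k). Then: (i) there exist constants 0 < c_1 ≤ c_2 < ∞ such that for all p with 1 ≤ p < r, c_1 (r − p)^{−β} ≤ |ζ|_p ≤ c_2 (r − p)^{−β}; and (ii) there is a constant c_6 > 0 such that for every k ≥ 1, writing x(k) = exp(e^k), one has P(ζ ≥ x(k)) ≥ c_6 (log x(k))^{β} · x(k)^{−r}. Hence the logarithmic factor in the moment-to-tail estimate cannot be removed.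 -/
/-!
With `δ = r - p`, the law of `ζ` gives `E|ζ|^p = C₅ ∑ₖ exp(βrk - δ eᵏ)`. The series
`∑ₖ exp(ak - δ eᵏ)` is of exact order `δ^(-a)`: its terms grow like `e^(ak)` as long as
`δ eᵏ ≤ 1`, i.e. up to `k ≈ log δ⁻¹`, and beyond that point they decay geometrically because
`e^(-x) ≤ m! x^(-m)` with `m > a`; conversely the single term at `k ≈ log δ⁻¹` is already of
size `δ^(-a)`. Taking `p`-th roots, `δ^(-βr) = (δ^(-β))^p · δ^(-βδ)` and `δ^(-βδ)` stays between
two positive constants for `δ ∈ (0, r - 1]`, which gives (i). For (ii) the atom at `x(k)` alone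
has mass `C₅ e^(βrk) x(k)^(-r) ≥ C₅ (log x(k))^β x(k)^(-r)`.
-/

open MeasureTheory ENNReal Real

open Set Function in
theorem lintegral_comp_eq_tsum_of_ae_mem_range {Ω α ι : Type*} [MeasurableSpace Ω]
    [MeasurableSpace α] [MeasurableSingletonClass α] [Countable ι] {μ : Measure Ω}
    {X : Ω → α} (hX : Measurable X) {x : ι → α} (hx : Injective x)
    (hval : ∀ᵐ ω ∂μ, X ω ∈ range x) {g : α → ℝ≥0∞} (hg : Measurable g) :
    ∫⁻ ω, g (X ω) ∂μ = ∑' i, g (x i) * μ (X ⁻¹' {x i}) := by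
  have hmap : (μ.map X).restrict (range x) = μ.map X :=
    Measure.restrict_eq_self_of_ae_mem
      ((ae_map_iff hX.aemeasurable (countable_range x).measurableSet).2 hval)
  rw [← lintegral_map hg hX, ← hmap, lintegral_countable _ (countable_range x),
    tsum_range (fun y => g y * μ.map X {y}) hx]
  simp only [Measure.map_apply hX (measurableSet_singleton _)]

theorem exp_sub_mul_exp_le (a t : ℝ) {δ : ℝ} (hδ : 0 < δ) (m : ℕ) :
    exp (a * t - δ * exp t) ≤ m.factorial / δ ^ m * exp ((a - m) * t) := by
  have hx : 0 < δ * exp t := by positivity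
  have key : exp (-(δ * exp t)) ≤ m.factorial / (δ * exp t) ^ m := by
    rw [exp_neg, inv_le_comm₀ (exp_pos _) (by positivity), inv_div]
    exact pow_div_factorial_le_exp _ hx.le m
  calc exp (a * t - δ * exp t) = exp (a * t) * exp (-(δ * exp t)) := by
        rw [← exp_add, sub_eq_add_neg]
    _ ≤ exp (a * t) * (m.factorial / (δ * exp t) ^ m) := by gcongr
    _ = m.factorial / δ ^ m * exp ((a - m) * t) := by
        rw [mul_pow, ← exp_nat_mul, sub_mul, exp_sub]
        field_simp

theorem tsum_le_of_le_geometric_of_le_geometric {f : ℕ → ℝ} (hf : ∀ k, 0 ≤ f k)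
    {x y q ρ : ℝ} (hq : 1 < q) (hρ₀ : 0 ≤ ρ) (hρ₁ : ρ < 1)
    (hfq : ∀ k, f k ≤ x * q ^ k) (hfρ : ∀ k, f k ≤ y * ρ ^ k) (K : ℕ) :
    ∑' k, f k ≤ x * (q ^ K - 1) / (q - 1) + y * ρ ^ K / (1 - ρ) := by
  have hgeo := summable_geometric_of_lt_one hρ₀ hρ₁
  have hsum : Summable f := .of_nonneg_of_le hf hfρ (hgeo.mul_left y)
  rw [← hsum.sum_add_tsum_nat_add K]
  gcongr
  · calc ∑ k ∈ Finset.range K, f k ≤ ∑ k ∈ Finset.range K, x * q ^ k :=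
          Finset.sum_le_sum fun k _ => hfq k
      _ = x * (q ^ K - 1) / (q - 1) := by
          rw [← Finset.mul_sum, geom_sum_eq hq.ne', mul_div_assoc]
  · calc ∑' k, f (k + K) ≤ ∑' k, y * ρ ^ K * ρ ^ k :=
          ((summable_nat_add_iff K).2 hsum).tsum_le_tsum
            (fun k => (hfρ _).trans_eq (by ring)) (hgeo.mul_left _)
      _ = y * ρ ^ K / (1 - ρ) := by
          rw [tsum_mul_left, tsum_geometric_of_lt_one hρ₀ hρ₁, div_eq_mul_inv]

theorem natFloor_le_max_zero (L : ℝ) : (⌊L⌋₊ : ℝ) ≤ max L 0 := by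
  rcases le_total 0 L with h | h
  · exact (Nat.floor_le h).trans (le_max_left _ _)
  · simp [Nat.floor_eq_zero.2 (h.trans_lt one_pos)]

noncomputable def expExpSum (a δ : ℝ) : ℝ := ∑' k : ℕ, exp (a * (k + 1) - δ * exp (k + 1))

theorem summable_expExpSum (a : ℝ) {δ : ℝ} (hδ : 0 < δ) :
    Summable fun k : ℕ => exp (a * (k + 1) - δ * exp (k + 1)) := by
  obtain ⟨m, hm⟩ := exists_nat_gt a
  have hρ : exp (a - m) < 1 := exp_lt_one_iff.2 (by linarith)
  refine .of_nonneg_of_le (fun _ => (exp_pos _).le) (fun k => ?_)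
    ((summable_geometric_of_lt_one (exp_pos _).le hρ).mul_left
      (m.factorial / δ ^ m * exp (a - m)))
  refine (exp_sub_mul_exp_le a _ hδ m).trans_eq ?_
  rw [mul_assoc, ← exp_nat_mul, ← exp_add]
  ring_nf

theorem expExpSum_pos (a : ℝ) {δ : ℝ} (hδ : 0 < δ) : 0 < expExpSum a δ :=
  (summable_expExpSum a hδ).tsum_pos (fun _ => (exp_pos _).le) 0 (exp_pos _)

theorem exp_neg_mul_max_mul_rpow_neg_le_expExpSum {a : ℝ} (ha : 0 ≤ a) {δ : ℝ} (hδ : 0 < δ) :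
    exp (-(exp 1 * max 1 δ)) * δ ^ (-a) ≤ expExpSum a δ := by
  set L := -log δ
  set j := ⌊L⌋₊
  have hδL : δ * exp L = 1 := by rw [exp_neg, exp_log hδ, mul_inv_cancel₀ hδ.ne']
  have hlow : a * L ≤ a * (j + 1) := by gcongr; exact (Nat.lt_floor_add_one L).le
  have hhigh : δ * exp (j + 1) ≤ exp 1 * max 1 δ := by
    calc δ * exp (j + 1) ≤ δ * exp (max L 0 + 1) := by gcongr; exact natFloor_le_max_zero L
      _ = exp 1 * max 1 δ := by
        rw [exp_add, exp_monotone.map_max, exp_zero, ← mul_assoc, mul_max_of_nonneg _ _ hδ.le,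
          hδL, mul_one, mul_comm]
  calc exp (-(exp 1 * max 1 δ)) * δ ^ (-a) = exp (a * L - exp 1 * max 1 δ) := by
        rw [rpow_def_of_pos hδ, ← exp_add]; simp only [L]; ring_nf
    _ ≤ exp (a * (j + 1) - δ * exp (j + 1)) := by gcongr
    _ ≤ expExpSum a δ :=
        (summable_expExpSum a hδ).le_tsum j (fun _ _ => (exp_pos _).le)

theorem exists_expExpSum_le_mul_rpow_neg {a : ℝ} (ha : 0 < a) :
    ∃ K, 0 < K ∧ ∀ δ, 0 < δ → expExpSum a δ ≤ K * δ ^ (-a) := by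
  obtain ⟨m, hm⟩ := exists_nat_gt a
  have hq : 1 < exp a := one_lt_exp_iff.2 ha
  have hρ : exp (a - m) < 1 := exp_lt_one_iff.2 (by linarith)
  refine ⟨exp a / (exp a - 1) + m.factorial / (1 - exp (a - m)), ?_, fun δ hδ => ?_⟩
  · have := sub_pos.2 hq
    have := sub_pos.2 hρ
    positivity
  set L := -log δ
  have hδL : δ ^ (-a) = exp (a * L) := by rw [rpow_def_of_pos hδ]; simp only [L]; ring_nf
  have hδm : δ ^ m = exp (-(m * L)) := by
    rw [← Real.rpow_natCast, rpow_def_of_pos hδ]; simp only [L]; ring_nf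
  have hsum := tsum_le_of_le_geometric_of_le_geometric (fun _ => (exp_pos _).le) hq
    (exp_pos _).le hρ (f := fun k : ℕ => exp (a * (k + 1) - δ * exp (k + 1))) (x := exp a)
    (y := m.factorial / δ ^ m * exp (a - m))
    (fun k => by
      rw [← exp_nat_mul, ← exp_add]
      exact exp_le_exp.2 (by nlinarith [exp_pos ((k : ℝ) + 1)]))
    (fun k => by
      refine (exp_sub_mul_exp_le a _ hδ m).trans_eq ?_
      rw [mul_assoc, ← exp_nat_mul, ← exp_add]
      ring_nf)
    ⌊L⌋₊
  have hhead : exp a ^ ⌊L⌋₊ - 1 ≤ exp (a * L) := by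
    have h := exp_le_exp.2 (mul_le_mul_of_nonneg_left (natFloor_le_max_zero L) ha.le)
    rw [mul_max_of_nonneg _ _ ha.le, mul_zero, exp_monotone.map_max, exp_zero] at h
    rw [← exp_nat_mul, mul_comm]
    linarith [max_le_add_of_nonneg (exp_pos (a * L)).le zero_le_one]
  have htail :
      m.factorial / δ ^ m * exp (a - m) * exp (a - m) ^ ⌊L⌋₊ ≤ m.factorial * exp (a * L) := by
    rw [hδm, ← exp_nat_mul, div_eq_mul_inv, ← exp_neg, neg_neg, mul_assoc, mul_assoc, ← exp_add,
      ← exp_add]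
    gcongr
    nlinarith [Nat.lt_floor_add_one L]
  calc expExpSum a δ ≤ _ := hsum
    _ ≤ exp a * exp (a * L) / (exp a - 1) + m.factorial * exp (a * L) / (1 - exp (a - m)) := by
        gcongr
    _ = _ := by rw [hδL]; ring

theorem exp_neg_mul_sq_le_rpow_neg_mul_self {β δ : ℝ} (hβ : 0 ≤ β) (hδ : 0 < δ) :
    exp (-(β * δ ^ 2)) ≤ δ ^ (-(β * δ)) := by
  rw [rpow_def_of_pos hδ]
  have : δ * log δ ≤ δ ^ 2 := by nlinarith [log_le_sub_one_of_pos hδ]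
  exact exp_le_exp.2 (by nlinarith)

theorem rpow_neg_mul_self_le_exp {β δ : ℝ} (hβ : 0 ≤ β) (hδ : 0 < δ) :
    δ ^ (-(β * δ)) ≤ exp β := by
  rw [rpow_def_of_pos hδ]
  have : δ - 1 ≤ δ * log δ := self_sub_one_le_mul_log hδ.le
  exact exp_le_exp.2 (by nlinarith)

theorem min_one_mul_le_rpow_one_div {A T y p : ℝ} (hA : 0 ≤ A) (hy : 0 ≤ y) (hp : 1 ≤ p)
    (h : A * y ^ p ≤ T) : min 1 A * y ≤ T ^ (1 / p) := by
  have hp' : 1 / p ≤ 1 := by rw [div_le_one (by linarith)]; exact hp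
  have hmin : min 1 A ≤ A ^ (1 / p) := by
    rcases le_total A 1 with hA1 | hA1
    · exact (min_le_right _ _).trans (self_le_rpow_of_le_one hA hA1 hp')
    · exact (min_le_left _ _).trans (one_le_rpow hA1 (by positivity))
  calc min 1 A * y ≤ A ^ (1 / p) * y := by gcongr
    _ = (A * y ^ p) ^ (1 / p) := by
        rw [mul_rpow hA (by positivity), ← rpow_mul hy, mul_one_div_cancel (by linarith),
          Real.rpow_one]
    _ ≤ T ^ (1 / p) := rpow_le_rpow (by positivity) h (by positivity)

theorem rpow_one_div_le_max_one_mul {B T y p : ℝ} (hB : 0 ≤ B) (hT : 0 ≤ T) (hy : 0 ≤ y)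
    (hp : 1 ≤ p) (h : T ≤ B * y ^ p) : T ^ (1 / p) ≤ max 1 B * y := by
  have hp' : 1 / p ≤ 1 := by rw [div_le_one (by linarith)]; exact hp
  have hmax : B ^ (1 / p) ≤ max 1 B := by
    rcases le_total B 1 with hB1 | hB1
    · exact (rpow_le_one hB hB1 (by positivity)).trans (le_max_left _ _)
    · exact (rpow_le_self_of_one_le hB1 hp').trans (le_max_right _ _)
  calc T ^ (1 / p) ≤ (B * y ^ p) ^ (1 / p) := rpow_le_rpow hT h (by positivity)
    _ = B ^ (1 / p) * y := by
        rw [mul_rpow hB (by positivity), ← rpow_mul hy, mul_one_div_cancel (by linarith),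
          Real.rpow_one]
    _ ≤ max 1 B * y := by gcongr

theorem exists_rpow_one_div_mul_expExpSum_bounds {r β C : ℝ} (hr : 1 < r) (hβ : 0 < β)
    (hC : 0 < C) :
    ∃ c₁ c₂ : ℝ, 0 < c₁ ∧ c₁ ≤ c₂ ∧ ∀ p, 1 ≤ p → p < r →
      c₁ * (r - p) ^ (-β) ≤ (C * expExpSum (β * r) (r - p)) ^ (1 / p) ∧
      (C * expExpSum (β * r) (r - p)) ^ (1 / p) ≤ c₂ * (r - p) ^ (-β) := by
  obtain ⟨K, hK, hKS⟩ := exists_expExpSum_le_mul_rpow_neg (a := β * r) (mul_pos hβ (by linarith))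
  set A := C * exp (-(exp 1 * max 1 (r - 1))) * exp (-(β * (r - 1) ^ 2))
  set B := C * K * exp β
  refine ⟨min 1 A, max 1 B, lt_min one_pos (by positivity),
    (min_le_left _ _).trans (le_max_left _ _), fun p hp hpr => ?_⟩
  set δ := r - p
  have hδ : 0 < δ := sub_pos.2 hpr
  have hδr : δ ≤ r - 1 := by linarith
  have hsplit : δ ^ (-(β * r)) = (δ ^ (-β)) ^ p * δ ^ (-(β * δ)) := by
    rw [← rpow_mul hδ.le, ← rpow_add hδ]; congr 1; ring
  constructor
  · refine min_one_mul_le_rpow_one_div (by positivity) (by positivity) hp ?_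
    have hexp : exp (-(β * (r - 1) ^ 2)) ≤ δ ^ (-(β * δ)) :=
      (exp_le_exp.2 (by gcongr)).trans (exp_neg_mul_sq_le_rpow_neg_mul_self hβ.le hδ)
    calc A * (δ ^ (-β)) ^ p
        = C * (exp (-(exp 1 * max 1 (r - 1))) * ((δ ^ (-β)) ^ p * exp (-(β * (r - 1) ^ 2)))) :=
          by ring
      _ ≤ C * (exp (-(exp 1 * max 1 δ)) * ((δ ^ (-β)) ^ p * δ ^ (-(β * δ)))) := by
          gcongr
      _ ≤ C * expExpSum (β * r) δ := by
          rw [← hsplit]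
          gcongr
          exact exp_neg_mul_max_mul_rpow_neg_le_expExpSum (by positivity) hδ
  · refine rpow_one_div_le_max_one_mul (by positivity) (mul_pos hC (expExpSum_pos _ hδ)).le
      (by positivity) hp ?_
    calc C * expExpSum (β * r) δ ≤ C * (K * ((δ ^ (-β)) ^ p * δ ^ (-(β * δ)))) := by
          rw [← hsplit]; gcongr; exact hKS δ hδ
      _ ≤ C * (K * ((δ ^ (-β)) ^ p * exp β)) := by
          gcongr; exact rpow_neg_mul_self_le_exp hβ.le hδ
      _ = B * (δ ^ (-β)) ^ p := by ring

theorem lintegral_enorm_rpow_eq_ofReal_mul_expExpSum {Ω : Type*} [MeasurableSpace Ω]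
    {μ : Measure Ω} {r β C₅ p : ℝ} {ζ : Ω → ℝ} (hζm : Measurable ζ)
    (hlaw : ∀ k : ℕ, 1 ≤ k →
      μ {ω | ζ ω = exp (exp k)} = ENNReal.ofReal (C₅ * exp (β * r * k - r * exp k)))
    (hvalues : ∀ᵐ ω ∂μ, ∃ k : ℕ, 1 ≤ k ∧ ζ ω = exp (exp k)) (hC₅ : 0 ≤ C₅) (hpr : p < r) :
    ∫⁻ ω, ‖ζ ω‖ₑ ^ p ∂μ = ENNReal.ofReal (C₅ * expExpSum (β * r) (r - p)) := by
  have hx : StrictMono fun k : ℕ => exp (exp (k + 1)) :=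
    exp_strictMono.comp (exp_strictMono.comp fun i j hij => by simpa using hij)
  have hval : ∀ᵐ ω ∂μ, ζ ω ∈ Set.range fun k : ℕ => exp (exp (k + 1)) := by
    filter_upwards [hvalues] with ω ⟨k, hk, hω⟩
    exact ⟨k - 1, by simp [hω, Nat.cast_sub hk]⟩
  rw [lintegral_comp_eq_tsum_of_ae_mem_range hζm hx.injective hval
    (g := fun y => ‖y‖ₑ ^ p) (measurable_enorm.pow_const p)]
  calc ∑' k : ℕ, ‖exp (exp (k + 1))‖ₑ ^ p * μ (ζ ⁻¹' {exp (exp (k + 1))})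
      = ∑' k : ℕ, ENNReal.ofReal (C₅ * exp (β * r * (k + 1) - (r - p) * exp (k + 1))) := by
        refine tsum_congr fun k => ?_
        have hk := hlaw (k + 1) k.succ_pos
        push_cast at hk
        change _ * μ {ω | ζ ω = _} = _
        rw [hk, Real.enorm_of_nonneg (exp_pos _).le, ofReal_rpow_of_pos (exp_pos _),
          ← ofReal_mul (by positivity), ← exp_mul, mul_left_comm, ← exp_add]
        ring_nf
    _ = ENNReal.ofReal (C₅ * expExpSum (β * r) (r - p)) := by
        rw [← ENNReal.ofReal_tsum_of_nonneg (fun _ => by positivity)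
          ((summable_expExpSum _ (sub_pos.2 hpr)).mul_left C₅), tsum_mul_left, expExpSum]

theorem log_exp_exp_rpow_mul_rpow_neg_le {β r t : ℝ} (hβ : 0 ≤ β) (hr : 1 ≤ r) (ht : 0 ≤ t) :
    log (exp (exp t)) ^ β * exp (exp t) ^ (-r) ≤ exp (β * r * t - r * exp t) := by
  rw [Real.log_exp, ← exp_mul, ← exp_mul, ← exp_add]
  exact exp_le_exp.2 (by nlinarith [mul_nonneg hβ ht])

theorem discrete_counterexample_moments_and_tail_general
    {Ω : Type*} [MeasurableSpace Ω] (μ : Measure Ω)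
    (r β : ℝ) (hr : 1 < r) (hβ : 0 < β)
    (C₅ : ℝ)
    (hC₅ : C₅ = (∑' k : ℕ, Real.exp (β * r * (k + 1) - r * Real.exp (k + 1)))⁻¹)
    (ζ : Ω → ℝ) (hζm : Measurable ζ)
    (hlaw : ∀ k : ℕ, 1 ≤ k →
      μ {ω | ζ ω = Real.exp (Real.exp k)} =
        ENNReal.ofReal (C₅ * Real.exp (β * r * k - r * Real.exp k)))
    (hvalues : ∀ᵐ ω ∂μ, ∃ k : ℕ, 1 ≤ k ∧ ζ ω = Real.exp (Real.exp k)) :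
    (∃ c₁ c₂ : ℝ, 0 < c₁ ∧ c₁ ≤ c₂ ∧ ∀ p : ℝ, 1 ≤ p → p < r →
        ENNReal.ofReal (c₁ * (r - p) ^ (-β)) ≤ eLpNorm ζ (ENNReal.ofReal p) μ ∧
        eLpNorm ζ (ENNReal.ofReal p) μ ≤ ENNReal.ofReal (c₂ * (r - p) ^ (-β))) ∧
    (∃ c₆ : ℝ, 0 < c₆ ∧ ∀ k : ℕ, 1 ≤ k →
        ENNReal.ofReal
            (c₆ * (Real.log (Real.exp (Real.exp k))) ^ β *
              Real.exp (Real.exp k) ^ (-r)) ≤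
          μ {ω | Real.exp (Real.exp k) ≤ ζ ω}) := by
  have hC₅pos : 0 < C₅ := hC₅ ▸ inv_pos.2 (expExpSum_pos (β * r) (by linarith))
  refine ⟨?_, C₅, hC₅pos, fun k hk => ?_⟩
  · obtain ⟨c₁, c₂, hc₁, hc₁₂, hc⟩ := exists_rpow_one_div_mul_expExpSum_bounds hr hβ hC₅pos
    refine ⟨c₁, c₂, hc₁, hc₁₂, fun p hp hpr => ?_⟩
    have hp₀ : 0 < p := by linarith
    rw [eLpNorm_eq_lintegral_rpow_enorm_toReal (by simpa using hp₀) ofReal_ne_top,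
      toReal_ofReal hp₀.le, lintegral_enorm_rpow_eq_ofReal_mul_expExpSum hζm hlaw hvalues
        hC₅pos.le hpr, ofReal_rpow_of_nonneg
        (mul_pos hC₅pos (expExpSum_pos _ (sub_pos.2 hpr))).le (by positivity)]
    exact ⟨ofReal_le_ofReal (hc p hp hpr).1, ofReal_le_ofReal (hc p hp hpr).2⟩
  · calc ENNReal.ofReal (C₅ * log (exp (exp k)) ^ β * exp (exp k) ^ (-r))
        ≤ ENNReal.ofReal (C₅ * exp (β * r * k - r * exp k)) := by
          rw [mul_assoc]
          gcongr
          exact log_exp_exp_rpow_mul_rpow_neg_le hβ.le hr.le k.cast_nonneg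
      _ = μ {ω | ζ ω = exp (exp k)} := (hlaw k hk).symm
      _ ≤ μ {ω | exp (exp k) ≤ ζ ω} := measure_mono fun ω hω => hω.symm.le

/-- Let `ζ` take the values `exp(e^k)`, `k = 1,2,…`, with
`P(ζ = exp(e^k)) = C₅ exp(βrk − r e^k)` where
`C₅⁻¹ = Σ_{k≥1} exp(βrk − r e^k)`. Then
(i) `c₁ (r − p)^{−β} ≤ |ζ|_p ≤ c₂ (r − p)^{−β}` for all `1 ≤ p < r`, and
(ii) `P(ζ ≥ x(k)) ≥ c₆ (log x(k))^β x(k)^{−r}` for `x(k) = exp(e^k)`. -/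
theorem discrete_counterexample_moments_and_tail
    {Ω : Type*} [MeasurableSpace Ω] (μ : Measure Ω) [IsProbabilityMeasure μ]
    (r β : ℝ) (hr : 1 < r) (hβ : 0 < β)
    (C₅ : ℝ)
    (hC₅ : C₅ = (∑' k : ℕ, Real.exp (β * r * (k + 1) - r * Real.exp (k + 1)))⁻¹)
    (ζ : Ω → ℝ) (hζm : Measurable ζ)
    (hlaw : ∀ k : ℕ, 1 ≤ k →
      μ {ω | ζ ω = Real.exp (Real.exp k)} =
        ENNReal.ofReal (C₅ * Real.exp (β * r * k - r * Real.exp k)))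
    (hvalues : ∀ᵐ ω ∂μ, ∃ k : ℕ, 1 ≤ k ∧ ζ ω = Real.exp (Real.exp k)) :
    (∃ c₁ c₂ : ℝ, 0 < c₁ ∧ c₁ ≤ c₂ ∧ ∀ p : ℝ, 1 ≤ p → p < r →
        ENNReal.ofReal (c₁ * (r - p) ^ (-β)) ≤ eLpNorm ζ (ENNReal.ofReal p) μ ∧
        eLpNorm ζ (ENNReal.ofReal p) μ ≤ ENNReal.ofReal (c₂ * (r - p) ^ (-β))) ∧
    (∃ c₆ : ℝ, 0 < c₆ ∧ ∀ k : ℕ, 1 ≤ k →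
        ENNReal.ofReal
            (c₆ * (Real.log (Real.exp (Real.exp k))) ^ β *
              Real.exp (Real.exp k) ^ (-r)) ≤
          μ {ω | Real.exp (Real.exp k) ≤ ζ ω}) :=
  discrete_counterexample_moments_and_tail_general μ r β hr hβ C₅ hC₅ ζ hζm hlaw hvalues
end
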